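/- arXiv:1812.05782 — 5 statements merged into one kernel-verified Lean document; each statement's English description precedes it below -/
import Mathlib

section
/- Let n ≥ 2 be an integer. For each i = 0,…,n let σ_i and τ_i be finite subsets of ℝ with |σ_i| ≤ n and |τ_i| = n, and assume that the sets τ_0,…,τ_n are pairwise disjoint. For each i let f_i : ℝ → ℤ be a function with f_i(θ) = 0 for all θ ∉ σ_i, and let h_i : ℝ → ℤ be a function with h_i(θ) ∈ {1,−1} for θ ∈ τ_i and h_i(θ) = 0 for θ ∉ τ_i. If the functions f_0 − h_0, f_1 − h_1, …, f_n − h_n are all equal to one another, then f_i = h_i for every i = 0,…,n (equivalently, the common difference f_i − h_i is identically zero). -/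
/-- Combinatorial core of the Floquet-multiplier matching theorem: if the differences
`f_i − h_i` of signature functions all agree, where `f_i` is supported on a set of at
most `n` points and `h_i` takes values `±1` on a set `τ_i` of exactly `n` points with the
`τ_i` pairwise disjoint, then `f_i = h_i` for all `i`. -/
theorem matching_spectra (n : ℕ) (hn : 2 ≤ n) (σ τ : Fin (n + 1) → Finset ℝ)
    (hσ : ∀ i, (σ i).card ≤ n) (hτ : ∀ i, (τ i).card = n)
    (hdisj : ∀ i j, i ≠ j → Disjoint (τ i) (τ j))
    (f h : Fin (n + 1) → ℝ → ℤ)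
    (hf : ∀ i, ∀ θ : ℝ, θ ∉ σ i → f i θ = 0)
    (hh1 : ∀ i, ∀ θ ∈ τ i, h i θ = 1 ∨ h i θ = -1)
    (hh0 : ∀ i, ∀ θ : ℝ, θ ∉ τ i → h i θ = 0)
    (heq : ∀ i j, ∀ θ : ℝ, f i θ - h i θ = f j θ - h j θ) :
    ∀ i, ∀ θ : ℝ, f i θ = h i θ := by
  classical
  set d : ℝ → ℤ := fun θ => f 0 θ - h 0 θ with hd
  have hdeq : ∀ i θ, f i θ - h i θ = d θ := fun i θ => heq i 0 θ
  set T : Finset ℝ := Finset.univ.biUnion τ with hT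
  have hTcard : T.card = (n + 1) * n := by
    rw [hT, Finset.card_biUnion (fun i _ j _ hij => hdisj i j hij)]
    simp [hτ, Finset.sum_const, Finset.card_univ]
  set g : ℝ → ℕ := fun θ => (Finset.univ.filter fun i => θ ∈ σ i).card with hg
  -- upper bound on the incidence count
  have hupper : ∑ θ ∈ T, g θ ≤ (n + 1) * n := by
    have hswap : ∑ θ ∈ T, g θ
        = ∑ i : Fin (n + 1), (T.filter fun θ => θ ∈ σ i).card := by
      simp only [hg, Finset.card_filter]
      rw [Finset.sum_comm]
    rw [hswap]
    calc ∑ i : Fin (n + 1), (T.filter fun θ => θ ∈ σ i).card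
        ≤ ∑ i : Fin (n + 1), (σ i).card := by
          refine Finset.sum_le_sum fun i _ => Finset.card_le_card ?_
          intro θ hθ
          exact (Finset.mem_filter.mp hθ).2
      _ ≤ ∑ _i : Fin (n + 1), n := Finset.sum_le_sum fun i _ => hσ i
      _ = (n + 1) * n := by simp [Finset.sum_const, Finset.card_univ]
  have hmemτ : ∀ θ ∈ T, ∃ i, θ ∈ τ i := by
    intro θ hθ
    rcases Finset.mem_biUnion.mp hθ with ⟨i, _, hi⟩
    exact ⟨i, hi⟩
  have hunique : ∀ {θ : ℝ} {i j : Fin (n + 1)}, θ ∈ τ i → j ≠ i → θ ∉ τ j := by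
    intro θ i j hi hj hcon
    exact (Finset.disjoint_left.mp (hdisj j i hj)) hcon hi
  -- if d θ ≠ 0, θ belongs to at least n of the σ's
  have hg_big : ∀ θ ∈ T, d θ ≠ 0 → n ≤ g θ := by
    intro θ hθ hdθ
    obtain ⟨i, hi⟩ := hmemτ θ hθ
    have hsubset : (Finset.univ.filter fun j => j ≠ i)
        ⊆ (Finset.univ.filter fun j => θ ∈ σ j) := by
      intro j hj
      have hjne : j ≠ i := (Finset.mem_filter.mp hj).2
      have hτj : θ ∉ τ j := hunique hi hjne
      have hhj : h j θ = 0 := hh0 j θ hτj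
      have hfj : f j θ = d θ := by have := hdeq j θ; omega
      have : θ ∈ σ j := by
        by_contra hns
        have := hf j θ hns
        omega
      exact Finset.mem_filter.mpr ⟨Finset.mem_univ j, this⟩
    have hcard : (Finset.univ.filter fun j => j ≠ i).card = n := by
      rw [Finset.filter_ne']
      simp [Finset.card_erase_of_mem, Finset.card_univ]
    calc n = (Finset.univ.filter fun j => j ≠ i).card := hcard.symm
      _ ≤ g θ := Finset.card_le_card hsubset
  -- every point of T belongs to at least one σ
  have hg_one : ∀ θ ∈ T, 1 ≤ g θ := by
    intro θ hθ
    by_cases hdθ : d θ = 0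
    · obtain ⟨i, hi⟩ := hmemτ θ hθ
      have hhi := hh1 i θ hi
      have : θ ∈ σ i := by
        by_contra hns
        have hf0 := hf i θ hns
        have := hdeq i θ
        omega
      have : i ∈ Finset.univ.filter fun j => θ ∈ σ j :=
        Finset.mem_filter.mpr ⟨Finset.mem_univ i, this⟩
      exact Finset.card_pos.mpr ⟨i, this⟩
    · exact le_trans (by omega) (hg_big θ hθ hdθ)
  -- the bad set is empty
  set B : Finset ℝ := T.filter fun θ => d θ ≠ 0 with hB
  have hBsub : B ⊆ T := Finset.filter_subset _ _
  have hBcard : B.card = 0 := by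
    have hsplit : ∑ θ ∈ B, g θ + ∑ θ ∈ T.filter (fun θ => ¬ d θ ≠ 0), g θ
        = ∑ θ ∈ T, g θ := Finset.sum_filter_add_sum_filter_not T _ g
    have hlow1 : B.card * n ≤ ∑ θ ∈ B, g θ := by
      calc B.card * n = ∑ _θ ∈ B, n := by rw [Finset.sum_const, smul_eq_mul]
        _ ≤ ∑ θ ∈ B, g θ := Finset.sum_le_sum fun θ hθ => by
            have := Finset.mem_filter.mp hθ
            exact hg_big θ this.1 this.2
    have hlow2 : (T.filter (fun θ => ¬ d θ ≠ 0)).card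
        ≤ ∑ θ ∈ T.filter (fun θ => ¬ d θ ≠ 0), g θ := by
      calc (T.filter (fun θ => ¬ d θ ≠ 0)).card
          = ∑ _θ ∈ T.filter (fun θ => ¬ d θ ≠ 0), 1 := by
            rw [Finset.sum_const, smul_eq_mul, mul_one]
        _ ≤ _ := Finset.sum_le_sum fun θ hθ =>
            hg_one θ (Finset.mem_filter.mp hθ).1
    have hcards : B.card + (T.filter (fun θ => ¬ d θ ≠ 0)).card = T.card :=
      Finset.card_filter_add_card_filter_not _
    have hBle : B.card ≤ T.card := Finset.card_le_card hBsub
    have h2B : B.card * 2 ≤ B.card * n := Nat.mul_le_mul_left _ hn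
    omega
  have hdT : ∀ θ ∈ T, d θ = 0 := by
    intro θ hθ
    by_contra hne
    have hmem : θ ∈ B := Finset.mem_filter.mpr ⟨hθ, hne⟩
    have hBe : B = ∅ := Finset.card_eq_zero.mp hBcard
    rw [hBe] at hmem
    exact Finset.notMem_empty θ hmem
  -- σ i = τ i
  have hsub : ∀ i, τ i ⊆ σ i := by
    intro i θ hθτ
    have hθT : θ ∈ T := Finset.mem_biUnion.mpr ⟨i, Finset.mem_univ i, hθτ⟩
    have hd0 : d θ = 0 := hdT θ hθT
    have hhi := hh1 i θ hθτ
    by_contra hns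
    have hf0 := hf i θ hns
    have := hdeq i θ
    omega
  have hσeq : ∀ i, τ i = σ i := fun i =>
    Finset.eq_of_subset_of_card_le (hsub i) (by rw [hτ]; exact hσ i)
  -- conclusion
  intro i θ
  by_cases hθ : θ ∈ T
  · have h1 := hdT θ hθ
    have h2 := hdeq i θ
    omega
  · have hτθ : θ ∉ τ i := fun hc => hθ (Finset.mem_biUnion.mpr ⟨i, Finset.mem_univ i, hc⟩)
    have hσθ : θ ∉ σ i := by rw [← hσeq i]; exact hτθ
    rw [hh0 i θ hτθ, hf i θ hσθ]
end

section
/- Let n ≥ 0 be an integer and let a, a' : {0, 1, …, n} → ℝ be strictly increasing functions such that a(n) − a(0) < 1 and a'(n) − a'(0) < 1. Assume that Σ_{i=0}^n a(i) = 0 = Σ_{i=0}^n a'(i) and that ⋃_{i=0}^n (a(i) + ℤ) = ⋃_{i=0}^n (a'(i) + ℤ) as subsets of ℝ. Then a(i) = a'(i) for every i. -/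
open Finset

/-- Two points of a half-open unit interval differing by an integer are equal. -/
private lemma eq_of_int_diff {c x y : ℝ} (hx : c ≤ x) (hx' : x < c + 1)
    (hy : c ≤ y) (hy' : y < c + 1) {m : ℤ} (h : x = y + m) : x = y := by
  have h1 : -1 < (m : ℝ) := by linarith
  have h2 : (m : ℝ) < 1 := by linarith
  have h3 : -1 < m := by exact_mod_cast h1
  have h4 : m < 1 := by exact_mod_cast h2
  have : m = 0 := by omega
  simp [this] at h
  linarith [h]

/-- A normalized non-degenerate rotation of `ℂPⁿ` is determined by its action spectrum:
there is at most one way to choose `n+1` consecutive points of the spectrum with sum zero. -/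
theorem rotation_determined_by_spectrum (n : ℕ) (a a' : Fin (n + 1) → ℝ)
    (hmono : StrictMono a) (hmono' : StrictMono a')
    (hgap : a (Fin.last n) - a 0 < 1) (hgap' : a' (Fin.last n) - a' 0 < 1)
    (hsum : ∑ i, a i = 0) (hsum' : ∑ i, a' i = 0)
    (hspec : {x : ℝ | ∃ i : Fin (n + 1), ∃ m : ℤ, x = a i + m} =
      {x : ℝ | ∃ i : Fin (n + 1), ∃ m : ℤ, x = a' i + m}) :
    ∀ i, a i = a' i := by
  set c := a' 0 with hc
  -- the integer translate of `a j` into `[c, c+1)`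
  set m : Fin (n + 1) → ℤ := fun j => ⌈c - a j⌉ with hm
  set b : Fin (n + 1) → ℝ := fun j => a j + m j with hb
  -- `a j` lies in `[a 0, a 0 + 1)`
  have haIco : ∀ j, a 0 ≤ a j ∧ a j < a 0 + 1 := by
    intro j
    have h1 : a 0 ≤ a j := hmono.monotone (Fin.zero_le j)
    have h2 : a j ≤ a (Fin.last n) := hmono.monotone (Fin.le_last j)
    exact ⟨h1, by linarith⟩
  -- `b j` lies in `[c, c+1)`
  have hbIco : ∀ j, c ≤ b j ∧ b j < c + 1 := by
    intro j
    have h1 : (c - a j : ℝ) ≤ (⌈c - a j⌉ : ℤ) := Int.le_ceil _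
    have h2 : ((⌈c - a j⌉ : ℤ) : ℝ) < (c - a j) + 1 := Int.ceil_lt_add_one _
    constructor <;> simp only [hb, hm] <;> linarith
  -- `a' i` lies in `[c, c+1)`
  have ha'Ico : ∀ i, c ≤ a' i ∧ a' i < c + 1 := by
    intro i
    have h1 : a' 0 ≤ a' i := hmono'.monotone (Fin.zero_le i)
    have h2 : a' i ≤ a' (Fin.last n) := hmono'.monotone (Fin.le_last i)
    exact ⟨h1, by linarith⟩
  -- `b` is injective
  have hinj_b : Function.Injective b := by
    intro i j h
    simp only [hb] at h
    have hd : a i = a j + ((m j - m i : ℤ) : ℝ) := by push_cast; linarith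
    have := eq_of_int_diff (haIco i).1 (haIco i).2 (haIco j).1 (haIco j).2 hd
    exact hmono.injective this
  -- the images of `b` and `a'` coincide
  have himage : univ.image b = univ.image a' := by
    ext x
    simp only [mem_image, mem_univ, true_and]
    constructor
    · rintro ⟨j, rfl⟩
      have hbS : b j ∈ {x : ℝ | ∃ i : Fin (n + 1), ∃ m : ℤ, x = a i + m} :=
        ⟨j, m j, rfl⟩
      rw [hspec] at hbS
      obtain ⟨i, m', h⟩ := hbS
      exact ⟨i, (eq_of_int_diff (hbIco j).1 (hbIco j).2 (ha'Ico i).1 (ha'Ico i).2 h).symm⟩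
    · rintro ⟨i, rfl⟩
      have ha'S : a' i ∈ {x : ℝ | ∃ i : Fin (n + 1), ∃ m : ℤ, x = a i + m} := by
        rw [hspec]; exact ⟨i, 0, by simp⟩
      obtain ⟨j, m', h⟩ := ha'S
      refine ⟨j, ?_⟩
      have hd : a' i = b j + ((m' - m j : ℤ) : ℝ) := by simp only [hb]; push_cast; linarith
      exact (eq_of_int_diff (ha'Ico i).1 (ha'Ico i).2 (hbIco j).1 (hbIco j).2 hd).symm
  -- hence the sums coincide, so `∑ m j = 0`
  have hsum_b : ∑ j, b j = 0 := by
    have e1 : ∑ x ∈ univ.image b, x = ∑ x ∈ univ.image a', x := by rw [himage]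
    rw [Finset.sum_image (fun x _ y _ h => hinj_b h),
      Finset.sum_image (fun x _ y _ h => hmono'.injective h)] at e1
    rw [e1, hsum']
  have hsum_m : ∑ j, m j = 0 := by
    have : ((∑ j, m j : ℤ) : ℝ) = 0 := by
      push_cast
      have : ∑ j, b j = ∑ j, a j + ∑ j, ((m j : ℤ) : ℝ) := by
        rw [← Finset.sum_add_distrib]
      rw [hsum_b, hsum] at this
      linarith
    exact_mod_cast this
  -- all the translates are by the same integer `t = m (last n)` or `t + 1`
  set t : ℤ := m (Fin.last n) with ht
  have hml : ∀ j, t ≤ m j := by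
    intro j
    exact Int.ceil_mono (by linarith [(haIco j).1, hmono.monotone (Fin.le_last j)])
  have hmu : ∀ j, m j ≤ t + 1 := by
    intro j
    have : m j ≤ ⌈(c - a (Fin.last n)) + (1 : ℤ)⌉ := by
      apply Int.ceil_mono
      push_cast
      linarith [(haIco j).1]
    rwa [Int.ceil_add_intCast] at this
  -- `∑ m j = 0` forces `t = 0`
  have hnt1 : ((n : ℤ) + 1) * t ≤ 0 := by
    calc ((n : ℤ) + 1) * t = ∑ _j : Fin (n + 1), t := by
          simp [mul_comm]
      _ ≤ ∑ j, m j := Finset.sum_le_sum fun j _ => hml j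
      _ = 0 := hsum_m
  have hnt2 : 0 ≤ ((n : ℤ) + 1) * t + n := by
    have h1 : ∑ j, m j ≤ ∑ j ∈ (univ : Finset (Fin (n + 1))).erase (Fin.last n), (t + 1) + t := by
      rw [← Finset.add_sum_erase _ m (mem_univ (Fin.last n))]
      have := Finset.sum_le_sum (s := (univ : Finset (Fin (n + 1))).erase (Fin.last n))
        (fun j _ => hmu j)
      omega
    have h2 : ((univ : Finset (Fin (n + 1))).erase (Fin.last n)).card = n := by
      rw [Finset.card_erase_of_mem (mem_univ _), Finset.card_univ]
      simp
    rw [Finset.sum_const, h2, hsum_m] at h1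
    simp only [nsmul_eq_mul] at h1
    linarith
  have ht0 : t = 0 := by
    have h1 : t ≤ 0 := by nlinarith [Nat.cast_nonneg (α := ℤ) n]
    have h2 : 0 ≤ t := by nlinarith [Nat.cast_nonneg (α := ℤ) n]
    omega
  -- hence all `m j = 0`, so `b = a`
  have hm0 : ∀ j, m j = 0 := by
    intro j
    have h1 := hml j
    have h2 : ∑ j, m j = 0 := hsum_m
    have h3 : ∀ j ∈ (univ : Finset (Fin (n + 1))), 0 ≤ m j := fun j _ => by
      have h4 := hml j; rw [ht0] at h4; exact h4
    have := (Finset.sum_eq_zero_iff_of_nonneg h3).1 h2 j (mem_univ j)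
    exact this
  have hba : b = a := by
    funext j
    simp [hb, hm0 j]
  rw [hba] at himage
  -- two strictly monotone maps with the same image are equal
  have hcard : (univ.image a').card = n + 1 := by
    rw [Finset.card_image_of_injective _ hmono'.injective, Finset.card_univ, Fintype.card_fin]
  have hmem_a : ∀ i, a i ∈ univ.image a' := by
    intro i
    rw [← himage]
    exact mem_image_of_mem a (mem_univ i)
  have hmem_a' : ∀ i, a' i ∈ univ.image a' := fun i => mem_image_of_mem a' (mem_univ i)
  have e1 := Finset.orderEmbOfFin_unique hcard hmem_a hmono
  have e2 := Finset.orderEmbOfFin_unique hcard hmem_a' hmono'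
  intro i
  exact congrFun (e1.trans e2.symm) i
end

section
/- Let l ≥ 1 and r ≥ 1 be integers, let θ_1, …, θ_r be pairwise distinct irrational real numbers in the open interval (0,1), and let s_1, …, s_r ∈ ℤ. Put λ := (exp(π i θ_1), …, exp(π i θ_r)) ∈ T^r and let Γ ⊆ T^r be the topological closure of the set {λ^k : k ∈ ℤ, k ≥ 1}. Assume that for every integer k ≥ 1 the integer Σ_{i=1}^r s_i·(⌊(k+1)θ_i/2⌋ − ⌊kθ_i/2⌋) is divisible by l. Let η : [0,1] → Γ be a continuous path and let u_1, …, u_r : [0,1] → ℝ be continuous functions such that η(t)_i = exp(2π i · u_i(t)) for all t ∈ [0,1] and all i, and such that u_i(0) ∉ ℤ and u_i(1) ∉ ℤ for every i with s_i ≠ 0. Then l divides Σ_{i=1}^r s_i·(⌊u_i(1)⌋ − ⌊u_i(0)⌋). -/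
/-!
Write `e(x) = exp(2πix)`, `λ = (e(θᵢ/2))ᵢ` and `b = e(Σᵢ sᵢθᵢ/(2l))`, so that `bˡ = ∏ᵢ λᵢ^sᵢ`.
Summing the index jumps gives `l ∣ Σᵢ sᵢ⌊kθᵢ/2⌋` for every `k`, hence
`bᵏ = e(Σᵢ sᵢ{kθᵢ/2}/l)`. The same divisibility, applied at `k + 1`, shows that `bᵏ → 1`
whenever `λᵏ → 1`. In the compact group `Tʳ × T` this makes the closure of `{(λᵏ, bᵏ)}` a closed
subgroup meeting `1 × T` only in `1`, i.e. the graph of a continuous `f : Γ → T` with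
`f(λᵏ) = bᵏ` and `f(g)ˡ = ∏ᵢ gᵢ^sᵢ`. Along the path, `f(η t) / e(Σᵢ sᵢuᵢ(t)/l)` is a continuous
`l`-th root of unity, hence constant. At an endpoint where no `uᵢ` with `sᵢ ≠ 0` is an integer,
the fractional parts `{kθᵢ/2}` converge to `{uᵢ}` as `λᵏ → η`, so this constant equals
`e(-Σᵢ sᵢ⌊uᵢ⌋/l)`; comparing `t = 0` with `t = 1` gives the claim.
-/

open scoped Real Topology
open Filter Set

section

variable {X Y : Type*} [TopologicalSpace X] [TopologicalSpace Y]

theorem continuousOn_of_isClosed_of_graph_subset [CompactSpace Y] {f : X → Y} {s : Set X}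
    {S : Set (X × Y)} (hS : IsClosed S) (hfS : ∀ x ∈ s, (x, f x) ∈ S)
    (huniq : ∀ x ∈ s, ∀ y, (x, y) ∈ S → y = f x) : ContinuousOn f s := by
  intro x hx
  refine tendsto_nhds_of_unique_mapClusterPt fun y hy => huniq x hx y ?_
  obtain ⟨U, hU, hfU⟩ := mapClusterPt_iff_ultrafilter.1 hy
  have hxU : Tendsto id (U : Filter X) (𝓝 x) := hU.trans nhdsWithin_le_nhds
  exact hS.mem_of_tendsto (hxU.prodMk_nhds hfU)
    (Eventually.filter_mono hU (eventually_nhdsWithin_of_forall hfS))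

theorem comap_nhds_neBot_of_mem_closure_range {α : Type*} {f : α → X} {x : X}
    (hx : x ∈ closure (range f)) : NeBot (comap f (𝓝 x)) :=
  comap_neBot_iff.2 fun t ht => by
    obtain ⟨_, hz, a, rfl⟩ := mem_closure_iff_nhds.1 hx t ht
    exact ⟨a, hz⟩

end

theorem eq_one_of_mk_one_mem_closure_range_pow {G H : Type*} [Monoid G] [TopologicalSpace G]
    [Monoid H] [TopologicalSpace H] [T2Space H] {a : G} {b : H}
    (hker : Tendsto (b ^ · : ℕ → H) (comap (a ^ · : ℕ → G) (𝓝 1)) (𝓝 1)) {y : H}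
    (hy : (1, y) ∈ closure (range ((a, b) ^ · : ℕ → G × H))) : y = 1 := by
  have hne := comap_nhds_neBot_of_mem_closure_range hy
  rw [nhds_prod_eq, comap_prod] at hne
  have : NeBot (comap (a ^ · : ℕ → G) (𝓝 1) ⊓ comap (b ^ · : ℕ → H) (𝓝 y)) := hne
  exact tendsto_nhds_unique (tendsto_comap.mono_left inf_le_right) (hker.mono_left inf_le_left)

section CompactGroup

variable {G H : Type*} [Group G] [TopologicalSpace G] [IsTopologicalGroup G] [CompactSpace G]
  [Group H] [TopologicalSpace H] [IsTopologicalGroup H] [CompactSpace H]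

theorem closure_setOf_pow_pos_eq (a : G) :
    closure {g | ∃ k : ℕ, 1 ≤ k ∧ g = a ^ k} = closure (range (a ^ · : ℕ → G)) := by
  refine (closure_mono ?_).antisymm
    (closure_minimal (range_subset_iff.2 fun n => ?_) isClosed_closure)
  · rintro _ ⟨k, -, rfl⟩
    exact ⟨k, rfl⟩
  · have hn : MapClusterPt (a ^ n) atTop (a ^ · : ℕ → G) := by
      simpa using mapClusterPt_self_zpow_atTop_pow a n
    refine closure_mono ?_ (mapClusterPt_atTop_iff_forall_mem_closure.1 hn 1)
    rintro _ ⟨k, hk, rfl⟩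
    exact ⟨k, hk, rfl⟩

variable [T2Space H] {a : G} {b : H}

theorem eq_of_mk_mem_closure_range_pow
    (hker : Tendsto (b ^ · : ℕ → H) (comap (a ^ · : ℕ → G) (𝓝 1)) (𝓝 1)) {x : G} {y y' : H}
    (hy : (x, y) ∈ closure (range ((a, b) ^ · : ℕ → G × H)))
    (hy' : (x, y') ∈ closure (range ((a, b) ^ · : ℕ → G × H))) : y = y' := by
  -- in a compact group the closure of the powers is already a subgroup
  set S := (Subgroup.zpowers (a, b)).topologicalClosure
  have hS : (S : Set (G × H)) = closure (range ((a, b) ^ · : ℕ → G × H)) := by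
    rw [Subgroup.topologicalClosure_coe, Subgroup.coe_zpowers, closure_range_zpow_eq_pow]
  rw [← hS] at hy hy'
  have hmem := S.mul_mem hy (S.inv_mem hy')
  rw [← SetLike.mem_coe, hS, Prod.inv_mk, Prod.mk_mul_mk, mul_inv_cancel] at hmem
  exact mul_inv_eq_one.1 (eq_one_of_mk_one_mem_closure_range_pow hker hmem)

theorem exists_continuousOn_closure_range_pow_eq [T2Space G]
    (hker : Tendsto (b ^ · : ℕ → H) (comap (a ^ · : ℕ → G) (𝓝 1)) (𝓝 1)) :
    ∃ f : G → H, ContinuousOn f (closure (range (a ^ · : ℕ → G))) ∧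
      ∀ n : ℕ, f (a ^ n) = b ^ n := by
  set S := closure (range ((a, b) ^ · : ℕ → G × H))
  have hfst : Prod.fst '' S = closure (range (a ^ · : ℕ → G)) := by
    rw [image_closure_of_isCompact isClosed_closure.isCompact continuous_fst.continuousOn,
      ← range_comp]
    rfl
  have hsec : ∀ x, ∃ y, x ∈ closure (range (a ^ · : ℕ → G)) → (x, y) ∈ S := fun x => by
    by_cases hx : x ∈ closure (range (a ^ · : ℕ → G))
    · obtain ⟨⟨x, y⟩, h, rfl⟩ := hfst ▸ hx
      exact ⟨y, fun _ => h⟩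
    · exact ⟨1, fun h => absurd h hx⟩
  choose f hf using hsec
  refine ⟨f, continuousOn_of_isClosed_of_graph_subset isClosed_closure hf
    fun x hx y hy => eq_of_mk_mem_closure_range_pow hker hy (hf x hx), fun n => ?_⟩
  exact eq_of_mk_mem_closure_range_pow hker (hf _ (subset_closure ⟨n, rfl⟩))
    (subset_closure ⟨n, rfl⟩)

end CompactGroup

section CircleExp

theorem circleExp_sum {ι : Type*} (s : Finset ι) (f : ι → ℝ) :
    Circle.exp (∑ i ∈ s, f i) = ∏ i ∈ s, Circle.exp (f i) := by
  induction s using Finset.cons_induction with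
  | empty => simp
  | cons a s ha ih => rw [Finset.sum_cons, Finset.prod_cons, Circle.exp_add, ih]

theorem finite_setOf_pow_eq_one {l : ℕ} (hl : l ≠ 0) : {z : Circle | z ^ l = 1}.Finite := by
  refine ((Polynomial.nthRootsFinset l (1 : ℂ)).finite_toSet.preimage
    Subtype.val_injective.injOn).subset fun z hz => ?_
  simpa [Polynomial.mem_nthRootsFinset (Nat.pos_of_ne_zero hl)] using
    congrArg Subtype.val (show z ^ l = 1 from hz)

theorem eq_of_continuous_of_forall_pow_eq_one {X : Type*} [TopologicalSpace X]
    [PreconnectedSpace X] {l : ℕ} (hl : l ≠ 0) {ζ : X → Circle} (hζ : Continuous ζ)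
    (hpow : ∀ x, ζ x ^ l = 1) (x y : X) : ζ x = ζ y :=
  isPreconnected_univ.constant_of_mapsTo (finite_setOf_pow_eq_one hl).isDiscrete
    hζ.continuousOn (fun x _ => hpow x) trivial trivial

theorem dvd_sub_of_circleExp_div_eq {l : ℕ} (hl : l ≠ 0) {m n : ℤ}
    (h : Circle.exp (2 * π * (m / l)) = Circle.exp (2 * π * (n / l))) : (l : ℤ) ∣ m - n := by
  obtain ⟨k, hk⟩ := Circle.exp_eq_exp.1 h
  refine ⟨k, ?_⟩
  have hl' : (l : ℝ) ≠ 0 := Nat.cast_ne_zero.2 hl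
  have : (m : ℝ) - n = l * k := by
    field_simp at hk
    nlinarith [Real.pi_pos]
  exact_mod_cast this

variable {α : Type*} {F : Filter α} {x : α → ℝ} {y : ℝ}

theorem tendsto_circleExp_iff :
    Tendsto (fun a => Circle.exp (2 * π * x a)) F (𝓝 (Circle.exp (2 * π * y))) ↔
      Tendsto (fun a => (x a : UnitAddCircle)) F (𝓝 (y : UnitAddCircle)) := by
  rw [(AddCircle.homeomorphCircle one_ne_zero).isInducing.tendsto_nhds_iff]
  simp only [Function.comp_def, AddCircle.homeomorphCircle_apply, AddCircle.toCircle_apply_mk,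
    div_one]

theorem tendsto_fract_of_tendsto_circleExp (hy : ∀ m : ℤ, y ≠ m)
    (h : Tendsto (fun a => Circle.exp (2 * π * x a)) F (𝓝 (Circle.exp (2 * π * y)))) :
    Tendsto (fun a => Int.fract (x a)) F (𝓝 (Int.fract y)) := by
  have hy0 : (y : UnitAddCircle) ≠ 0 := by
    rw [Ne, AddCircle.coe_eq_zero_iff]
    rintro ⟨n, hn⟩
    exact hy n (by simpa using hn.symm)
  have hc := (continuous_subtype_val.continuousAt.comp
    (AddCircle.continuousAt_equivIco (p := (1 : ℝ)) 0 hy0)).tendsto.comp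
    (tendsto_circleExp_iff.1 h)
  simpa [Function.comp_def] using hc

theorem tendsto_sub_round_of_tendsto_circleExp_one
    (h : Tendsto (fun a => Circle.exp (2 * π * x a)) F (𝓝 1)) :
    Tendsto (fun a => x a - round (x a)) F (𝓝 0) := by
  have h0 : Tendsto (fun a => (x a : UnitAddCircle)) F (𝓝 ((0 : ℝ) : UnitAddCircle)) :=
    tendsto_circleExp_iff.1 (by simpa using h)
  rw [AddCircle.coe_zero, tendsto_zero_iff_norm_tendsto_zero] at h0
  rw [tendsto_zero_iff_norm_tendsto_zero]
  simpa only [UnitAddCircle.norm_eq, Real.norm_eq_abs] using h0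

end CircleExp

theorem round_eq_floor_add {x c : ℝ} (h : |x - round x| < min c (1 - c)) :
    round x = ⌊x + c⌋ := by
  rw [eq_comm, Int.floor_eq_iff]
  obtain ⟨h₁, h₂⟩ := abs_lt.1 h
  constructor <;> linarith [min_le_left c (1 - c), min_le_right c (1 - c)]

section Rotation

variable {ι : Type*} (θ : ι → ℝ)

noncomputable def lam : ι → Circle := fun i => Circle.exp (π * θ i)

theorem lam_pow_apply (k : ℕ) (i : ι) :
    (lam θ ^ k) i = Circle.exp (2 * π * (k * θ i / 2)) := by
  rw [Pi.pow_apply, lam, ← Circle.exp_natCast_mul]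
  ring_nf

variable [Fintype ι] (s : ι → ℤ) (l : ℕ)

noncomputable def lamRoot : Circle := Circle.exp (π * (∑ i, s i * θ i) / l)

variable {θ s l}

theorem lamRoot_pow (k : ℕ) :
    lamRoot θ s l ^ k = Circle.exp (2 * π * ((∑ i, s i * (k * θ i / 2)) / l)) := by
  rw [lamRoot, ← Circle.exp_natCast_mul]
  congr 1
  simp only [mul_div_assoc', Finset.mul_sum, Finset.sum_div]
  refine Finset.sum_congr rfl fun i _ => by ring

theorem lamRoot_pow_self (hl : l ≠ 0) : lamRoot θ s l ^ l = ∏ i, lam θ i ^ s i := by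
  rw [lamRoot, ← Circle.exp_natCast_mul, mul_div_cancel₀ _ (Nat.cast_ne_zero.2 hl),
    Finset.mul_sum, circleExp_sum]
  exact Finset.prod_congr rfl fun i _ => by rw [lam, ← Circle.exp_intCast_mul]; ring_nf

theorem circleExp_sum_div_eq {x z : ι → ℝ} {n : ι → ℤ} (hx : ∀ i, x i = z i + n i)
    (hn : (l : ℤ) ∣ ∑ i, s i * n i) :
    Circle.exp (2 * π * ((∑ i, s i * x i) / l)) =
      Circle.exp (2 * π * ((∑ i, s i * z i) / l)) := by
  obtain ⟨m, hm⟩ := hn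
  have hsum : ∑ i, (s i : ℝ) * x i = ∑ i, s i * z i + l * m := by
    simp only [hx, mul_add, Finset.sum_add_distrib]
    exact_mod_cast congrArg (fun t => ∑ i, (s i : ℝ) * z i + t) (by exact_mod_cast hm)
  rcases eq_or_ne l 0 with rfl | hl
  · simp
  · rw [hsum, add_div, mul_div_cancel_left₀ _ (Nat.cast_ne_zero.2 hl), mul_add, Circle.exp_add,
      Circle.exp_two_pi_mul_int, mul_one]

theorem dvd_sum_floor_mul (hθ : ∀ i, θ i ∈ Ioo 0 2)
    (hjump : ∀ k : ℕ, 1 ≤ k →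
      (l : ℤ) ∣ ∑ i, s i * (⌊((k : ℝ) + 1) * θ i / 2⌋ - ⌊(k : ℝ) * θ i / 2⌋)) (k : ℕ) :
    (l : ℤ) ∣ ∑ i, s i * ⌊(k : ℝ) * θ i / 2⌋ := by
  induction k with
  | zero => simp
  | succ k ih =>
    rcases Nat.eq_zero_or_pos k with rfl | hk
    · have hfloor : ∀ i, ⌊θ i / 2⌋ = 0 := fun i => by
        rw [Int.floor_eq_zero_iff]
        constructor <;> linarith [(hθ i).1, (hθ i).2]
      simp [hfloor]
    · have hsplit : ∑ i, s i * ⌊((k + 1 : ℕ) : ℝ) * θ i / 2⌋ = ∑ i, s i * ⌊(k : ℝ) * θ i / 2⌋ +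
          ∑ i, s i * (⌊((k : ℝ) + 1) * θ i / 2⌋ - ⌊(k : ℝ) * θ i / 2⌋) := by
        rw [← Finset.sum_add_distrib]
        push_cast
        exact Finset.sum_congr rfl fun i _ => by ring
      rw [hsplit]
      exact dvd_add ih (hjump k hk)

variable (hdvd : ∀ k : ℕ, (l : ℤ) ∣ ∑ i, s i * ⌊(k : ℝ) * θ i / 2⌋)
include hdvd

theorem lamRoot_pow_eq_fract (k : ℕ) :
    lamRoot θ s l ^ k = Circle.exp (2 * π * ((∑ i, s i * Int.fract (k * θ i / 2)) / l)) :=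
  (lamRoot_pow k).trans (circleExp_sum_div_eq (fun _ => (Int.fract_add_floor _).symm) (hdvd k))

theorem tendsto_lamRoot_pow (hθ : ∀ i, θ i ∈ Ioo 0 2) :
    Tendsto (lamRoot θ s l ^ · : ℕ → Circle) (comap (lam θ ^ · : ℕ → ι → Circle) (𝓝 1))
      (𝓝 1) := by
  -- where `λᵏ` is near `1`, each `kθᵢ/2` is near the integer `⌊(k + 1)θᵢ/2⌋`
  set F := comap (lam θ ^ · : ℕ → ι → Circle) (𝓝 1)
  set d : ι → ℕ → ℝ := fun i k => k * θ i / 2 - round ((k : ℝ) * θ i / 2)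
  have hd : ∀ i, Tendsto (d i) F (𝓝 0) := fun i =>
    tendsto_sub_round_of_tendsto_circleExp_one <| by
      simpa only [Function.comp_def, lam_pow_apply, Pi.one_apply] using
        ((continuous_apply i).tendsto (1 : ι → Circle)).comp
          (tendsto_comap (f := (lam θ ^ · : ℕ → ι → Circle)))
  have hround : ∀ᶠ k : ℕ in F, ∀ i, round ((k : ℝ) * θ i / 2) = ⌊((k : ℝ) + 1) * θ i / 2⌋ := by
    refine eventually_all.2 fun i => ?_
    have hpos : 0 < min (θ i / 2) (1 - θ i / 2) :=
      lt_min (by linarith [(hθ i).1]) (by linarith [(hθ i).2])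
    filter_upwards [Metric.tendsto_nhds.1 (hd i) _ hpos] with k hk
    rw [round_eq_floor_add (by simpa [Real.dist_eq] using hk)]
    ring_nf
  have hlim : Tendsto (fun k => Circle.exp (2 * π * ((∑ i, s i * d i k) / l))) F (𝓝 1) := by
    simpa [Function.comp_def] using (Circle.exp.continuous.tendsto _).comp
      (((tendsto_finsetSum _ fun i _ => (hd i).const_mul (s i : ℝ)).div_const (l : ℝ)).const_mul
        (2 * π))
  refine hlim.congr' (hround.mono fun k hk => ?_)
  dsimp only
  rw [lamRoot_pow]
  refine (circleExp_sum_div_eq (n := fun i => ⌊((k : ℝ) + 1) * θ i / 2⌋) (fun i => ?_) ?_).symm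
  · rw [← hk i]
    exact (sub_add_cancel _ _).symm
  · simpa using hdvd (k + 1)

end Rotation

section OrbitClosure

variable {ι : Type*} [Fintype ι] {θ : ι → ℝ} {s : ι → ℤ} {l : ℕ} {f : (ι → Circle) → Circle}
  (hf : ContinuousOn f (closure (range (lam θ ^ · : ℕ → ι → Circle))))
  (hpow : ∀ k : ℕ, f (lam θ ^ k) = lamRoot θ s l ^ k)
include hf hpow

theorem pow_eq_prod_zpow (hl : l ≠ 0) {g : ι → Circle}
    (hg : g ∈ closure (range (lam θ ^ · : ℕ → ι → Circle))) : f g ^ l = ∏ i, g i ^ s i := by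
  refine Set.EqOn.of_subset_closure ?_ (hf.pow l)
    (by fun_prop : Continuous fun g : ι → Circle => ∏ i, g i ^ s i).continuousOn
    subset_closure subset_rfl hg
  rintro _ ⟨k, rfl⟩
  change f (lam θ ^ k) ^ l = ∏ i, (lam θ ^ k) i ^ s i
  rw [hpow, ← pow_mul, mul_comm, pow_mul, lamRoot_pow_self hl, ← Finset.prod_pow]
  refine Finset.prod_congr rfl fun i _ => ?_
  rw [Pi.pow_apply, ← zpow_natCast, ← zpow_mul, mul_comm, zpow_mul, zpow_natCast]

theorem eq_circleExp_sum_fract (hdvd : ∀ k : ℕ, (l : ℤ) ∣ ∑ i, s i * ⌊(k : ℝ) * θ i / 2⌋)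
    {g : ι → Circle} (hg : g ∈ closure (range (lam θ ^ · : ℕ → ι → Circle))) {x : ι → ℝ}
    (hgx : ∀ i, g i = Circle.exp (2 * π * x i)) (hx : ∀ i, s i ≠ 0 → ∀ m : ℤ, x i ≠ m) :
    f g = Circle.exp (2 * π * ((∑ i, s i * Int.fract (x i)) / l)) := by
  set F := comap (lam θ ^ · : ℕ → ι → Circle) (𝓝 g)
  have : NeBot F := comap_nhds_neBot_of_mem_closure_range hg
  have hlim : Tendsto (fun k => f (lam θ ^ k)) F (𝓝 (f g)) :=
    (hf g hg).tendsto.comp (tendsto_nhdsWithin_iff.2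
      ⟨tendsto_comap, Eventually.of_forall fun k => subset_closure (mem_range_self k)⟩)
  refine tendsto_nhds_unique hlim ?_
  simp only [hpow, lamRoot_pow_eq_fract hdvd]
  refine (Circle.exp.continuous.tendsto _).comp
    (((tendsto_finsetSum _ fun i _ => ?_).div_const _).const_mul _)
  by_cases hs : s i = 0
  · simp [hs]
  refine (tendsto_fract_of_tendsto_circleExp (hx i hs) ?_).const_mul _
  simpa only [Function.comp_def, lam_pow_apply, hgx] using
    ((continuous_apply i).tendsto g).comp (tendsto_comap (f := (lam θ ^ · : ℕ → ι → Circle)))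

theorem div_circleExp_pow_eq_one (hl : l ≠ 0) {g : ι → Circle}
    (hg : g ∈ closure (range (lam θ ^ · : ℕ → ι → Circle))) {x : ι → ℝ}
    (hgx : ∀ i, g i = Circle.exp (2 * π * x i)) :
    (f g / Circle.exp (2 * π * ((∑ i, s i * x i) / l))) ^ l = 1 := by
  rw [div_pow, pow_eq_prod_zpow hf hpow hl hg, ← Circle.exp_natCast_mul, mul_left_comm,
    mul_div_cancel₀ _ (Nat.cast_ne_zero.2 hl), Finset.mul_sum, circleExp_sum]
  simp [hgx, ← Circle.exp_intCast_mul, mul_left_comm]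

theorem div_circleExp_eq_circleExp_floor
    (hdvd : ∀ k : ℕ, (l : ℤ) ∣ ∑ i, s i * ⌊(k : ℝ) * θ i / 2⌋) {g : ι → Circle}
    (hg : g ∈ closure (range (lam θ ^ · : ℕ → ι → Circle))) {x : ι → ℝ}
    (hgx : ∀ i, g i = Circle.exp (2 * π * x i)) (hx : ∀ i, s i ≠ 0 → ∀ m : ℤ, x i ≠ m) :
    f g / Circle.exp (2 * π * ((∑ i, s i * x i) / l)) =
      Circle.exp (2 * π * ((-∑ i, s i * ⌊x i⌋ : ℤ) / l)) := by
  rw [eq_circleExp_sum_fract hf hpow hdvd hg hgx hx, ← Circle.exp_sub, ← mul_sub, ← sub_div]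
  congr 3
  push_cast
  rw [← Finset.sum_sub_distrib, ← Finset.sum_neg_distrib]
  exact Finset.sum_congr rfl fun i _ => by rw [Int.fract]; ring

end OrbitClosure

theorem intersection_index_divisible_general (l r : ℕ) (hl : 1 ≤ l)
    (θ : Fin r → ℝ)
    (hmem : ∀ i, θ i ∈ Set.Ioo (0 : ℝ) 1)
    (s : Fin r → ℤ)
    (hdiv : ∀ k : ℕ, 1 ≤ k →
      (l : ℤ) ∣ ∑ i, s i * (⌊((k : ℝ) + 1) * θ i / 2⌋ - ⌊(k : ℝ) * θ i / 2⌋))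
    (Γ : Set (Fin r → Circle))
    (hΓ : Γ = closure {g : Fin r → Circle |
      ∃ k : ℕ, 1 ≤ k ∧ g = fun i => (Circle.exp (π * θ i)) ^ k})
    (η : Set.Icc (0 : ℝ) 1 → Fin r → Circle) (hη : Continuous η)
    (hηΓ : ∀ t, η t ∈ Γ)
    (u : Fin r → Set.Icc (0 : ℝ) 1 → ℝ) (hu : ∀ i, Continuous (u i))
    (hlift : ∀ t, ∀ i, η t i = Circle.exp (2 * π * u i t))
    (h0 : ∀ i, s i ≠ 0 → ∀ m : ℤ, u i ⟨0, Set.left_mem_Icc.2 zero_le_one⟩ ≠ m)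
    (h1 : ∀ i, s i ≠ 0 → ∀ m : ℤ, u i ⟨1, Set.right_mem_Icc.2 zero_le_one⟩ ≠ m) :
    (l : ℤ) ∣ ∑ i, s i *
      (⌊u i ⟨1, Set.right_mem_Icc.2 zero_le_one⟩⌋ -
       ⌊u i ⟨0, Set.left_mem_Icc.2 zero_le_one⟩⌋) := by
  have hl0 : l ≠ 0 := Nat.one_le_iff_ne_zero.1 hl
  have hθ : ∀ i, θ i ∈ Ioo (0 : ℝ) 2 := fun i => ⟨(hmem i).1, (hmem i).2.trans one_lt_two⟩
  have hdvd := dvd_sum_floor_mul hθ hdiv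
  obtain ⟨f, hf, hpow⟩ := exists_continuousOn_closure_range_pow_eq (tendsto_lamRoot_pow hdvd hθ)
  rw [hΓ.trans (closure_setOf_pow_pos_eq (lam θ))] at hηΓ
  set ζ : Set.Icc (0 : ℝ) 1 → Circle :=
    fun t => f (η t) / Circle.exp (2 * π * ((∑ i, s i * u i t) / l))
  have hconst := eq_of_continuous_of_forall_pow_eq_one (ζ := ζ) hl0
    ((hf.comp_continuous hη hηΓ).div' (by fun_prop))
    (fun t => div_circleExp_pow_eq_one hf hpow hl0 (hηΓ t) (hlift t))
    ⟨1, Set.right_mem_Icc.2 zero_le_one⟩ ⟨0, Set.left_mem_Icc.2 zero_le_one⟩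
  simp only [ζ] at hconst
  rw [div_circleExp_eq_circleExp_floor hf hpow hdvd (hηΓ _) (hlift _) h1,
    div_circleExp_eq_circleExp_floor hf hpow hdvd (hηΓ _) (hlift _) h0] at hconst
  simpa [mul_sub, Finset.sum_sub_distrib, neg_add_eq_sub, dvd_sub_comm]
    using dvd_sub_of_circleExp_div_eq hl0 hconst

/-- Divisibility of the intersection index of a path in `Γ` with the index cycle:
if `l` divides every index jump `Σᵢ sᵢ·(⌊(k+1)θᵢ/2⌋ − ⌊kθᵢ/2⌋)`, then for any continuous
path `η` in `Γ` with continuous lifts `uᵢ` of its coordinates whose endpoints avoid ℤ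
(for `sᵢ ≠ 0`), the intersection index `Σᵢ sᵢ·(⌊uᵢ(1)⌋ − ⌊uᵢ(0)⌋)` is divisible by `l`. -/
theorem intersection_index_divisible (l r : ℕ) (hl : 1 ≤ l) (hr : 1 ≤ r)
    (θ : Fin r → ℝ) (hirr : ∀ i, Irrational (θ i))
    (hmem : ∀ i, θ i ∈ Set.Ioo (0 : ℝ) 1) (hdist : Function.Injective θ)
    (s : Fin r → ℤ)
    (hdiv : ∀ k : ℕ, 1 ≤ k →
      (l : ℤ) ∣ ∑ i, s i * (⌊((k : ℝ) + 1) * θ i / 2⌋ - ⌊(k : ℝ) * θ i / 2⌋))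
    (Γ : Set (Fin r → Circle))
    (hΓ : Γ = closure {g : Fin r → Circle |
      ∃ k : ℕ, 1 ≤ k ∧ g = fun i => (Circle.exp (π * θ i)) ^ k})
    (η : Set.Icc (0 : ℝ) 1 → Fin r → Circle) (hη : Continuous η)
    (hηΓ : ∀ t, η t ∈ Γ)
    (u : Fin r → Set.Icc (0 : ℝ) 1 → ℝ) (hu : ∀ i, Continuous (u i))
    (hlift : ∀ t, ∀ i, η t i = Circle.exp (2 * π * u i t))
    (h0 : ∀ i, s i ≠ 0 → ∀ m : ℤ, u i ⟨0, Set.left_mem_Icc.2 zero_le_one⟩ ≠ m)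
    (h1 : ∀ i, s i ≠ 0 → ∀ m : ℤ, u i ⟨1, Set.right_mem_Icc.2 zero_le_one⟩ ≠ m) :
    (l : ℤ) ∣ ∑ i, s i *
      (⌊u i ⟨1, Set.right_mem_Icc.2 zero_le_one⟩⌋ -
       ⌊u i ⟨0, Set.left_mem_Icc.2 zero_le_one⟩⌋) :=
  intersection_index_divisible_general l r hl θ hmem s hdiv Γ hΓ η hη hηΓ u hu hlift h0 h1
end

section
/- Let r ≥ 1 be an integer, let θ_1, …, θ_r be pairwise distinct real numbers in the open interval (0,1), and let α_1, …, α_r be real numbers. Suppose the point λ := (exp(π i θ_1), …, exp(π i θ_r)) ∈ T^r lies in the topological closure of the one-parameter subgroup P := {(exp(π i α_1 t), …, exp(π i α_r t)) : t ∈ ℝ} ⊆ T^r. Then: (1) α_i ≠ 0 for every i, and for all i ≠ j one has α_i ≠ α_j and α_i ≠ −α_j (so the absolute values |α_1|, …, |α_r| are pairwise distinct); and (2) if i₀ is the index with |α_{i₀}| ≥ |α_j| for all j, then the point g := (exp(2π i α_1/α_{i₀}), …, exp(2π i α_r/α_{i₀})) belongs to P and satisfies g_{i₀} = 1 and g_j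 ≠ 1 for every j ≠ i₀. -/
open scoped Real

lemma closure_sub_aux {r : ℕ} {P : Set (Fin r → Circle)} {S : Set (Fin r → Circle)}
    (hS : IsClosed S) (hPS : P ⊆ S) {x : Fin r → Circle} (hx : x ∈ closure P) : x ∈ S :=
  closure_minimal hPS hS hx

/-- Step I of the torus lemma: if the eigenvalue vector `λ = (exp(πiθ₁),…,exp(πiθᵣ))`
lies in the closure of the one-parameter subgroup with exponent vector `α`, then the
`αᵢ` are nonzero with pairwise distinct absolute values, and for an index `i₀` with
`|α_{i₀}|` maximal the point `(exp(2πiα₁/α_{i₀}),…)` lies in the subgroup, has `i₀`-th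
coordinate `1` and all other coordinates different from `1`. -/
theorem one_parameter_subgroup_step (r : ℕ) (hr : 1 ≤ r) (θ : Fin r → ℝ)
    (hmem : ∀ i, θ i ∈ Set.Ioo (0 : ℝ) 1) (hdist : Function.Injective θ)
    (α : Fin r → ℝ) (P : Set (Fin r → Circle))
    (hP : P = {g : Fin r → Circle | ∃ t : ℝ, g = fun i => Circle.exp (π * α i * t)})
    (hlam : (fun i => Circle.exp (π * θ i)) ∈ closure P) :
    ((∀ i, α i ≠ 0) ∧ (∀ i j, i ≠ j → α i ≠ α j ∧ α i ≠ -α j) ∧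
        (∀ i j, i ≠ j → |α i| ≠ |α j|)) ∧
      ∀ i₀ : Fin r, (∀ j, |α j| ≤ |α i₀|) →
        (fun i => Circle.exp (2 * π * α i / α i₀)) ∈ P ∧
        Circle.exp (2 * π * α i₀ / α i₀) = 1 ∧
        ∀ j, j ≠ i₀ → Circle.exp (2 * π * α j / α i₀) ≠ 1 := by
  have hπ : (0:ℝ) < π := Real.pi_pos
  -- (1a) α i ≠ 0
  have h0 : ∀ i, α i ≠ 0 := by
    intro i hi
    have hS : IsClosed {g : Fin r → Circle | g i = 1} :=
      isClosed_eq (continuous_apply i) continuous_const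
    have hPS : P ⊆ {g : Fin r → Circle | g i = 1} := by
      rw [hP]; rintro g ⟨t, rfl⟩
      simp [hi]
    have hx := closure_sub_aux hS hPS hlam
    simp only [Set.mem_setOf_eq] at hx
    rw [Circle.exp_eq_one] at hx
    obtain ⟨n, hn⟩ := hx
    have hθ : θ i = 2 * n := by
      rw [show (n:ℝ) * (2 * π) = π * (2 * n) by ring] at hn
      exact mul_left_cancel₀ hπ.ne' hn
    obtain ⟨h1, h2⟩ := hmem i
    rw [hθ] at h1 h2
    have hn0 : (0:ℤ) < n := by exact_mod_cast (by linarith : (0:ℝ) < (n:ℝ))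
    have : (1:ℝ) ≤ (n:ℝ) := by exact_mod_cast hn0
    linarith
  -- (1b) pairwise relations
  have hpair : ∀ i j, i ≠ j → α i ≠ α j ∧ α i ≠ -α j := by
    intro i j hij
    constructor
    · intro he
      have hS : IsClosed {g : Fin r → Circle | g i = g j} :=
        isClosed_eq (continuous_apply i) (continuous_apply j)
      have hPS : P ⊆ {g : Fin r → Circle | g i = g j} := by
        rw [hP]; rintro g ⟨t, rfl⟩
        simp [he]
      have hx := closure_sub_aux hS hPS hlam
      simp only [Set.mem_setOf_eq] at hx
      rw [Circle.exp_eq_exp] at hx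
      obtain ⟨n, hn⟩ := hx
      have hθ : θ i = θ j + 2 * n := by
        rw [show π * θ j + (n:ℝ) * (2 * π) = π * (θ j + 2 * n) by ring] at hn
        exact mul_left_cancel₀ hπ.ne' hn
      obtain ⟨h1, h2⟩ := hmem i
      obtain ⟨h3, h4⟩ := hmem j
      have hn0 : n = 0 := by
        have hlt : (-1:ℝ) < 2 * n := by rw [hθ] at h1; linarith
        have hgt : (2:ℝ) * n < 1 := by rw [hθ] at h2; linarith
        have l1 : (-1:ℤ) < 2 * n := by exact_mod_cast (by push_cast; linarith : (-1:ℝ) < ((2*n : ℤ):ℝ))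
        have l2 : (2:ℤ) * n < 1 := by exact_mod_cast (by push_cast; linarith : ((2*n : ℤ):ℝ) < 1)
        omega
      apply hij
      apply hdist
      rw [hθ, hn0]; push_cast; ring
    · intro he
      have hS : IsClosed {g : Fin r → Circle | g i * g j = 1} :=
        isClosed_eq (((continuous_apply i).mul (continuous_apply j))) continuous_const
      have hPS : P ⊆ {g : Fin r → Circle | g i * g j = 1} := by
        rw [hP]; rintro g ⟨t, rfl⟩
        simp only [Set.mem_setOf_eq, ← Circle.exp_add]
        rw [he]
        norm_num
      have hx := closure_sub_aux hS hPS hlam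
      simp only [Set.mem_setOf_eq, ← Circle.exp_add] at hx
      rw [Circle.exp_eq_one] at hx
      obtain ⟨n, hn⟩ := hx
      have hθ : θ i + θ j = 2 * n := by
        rw [show π * θ i + π * θ j = π * (θ i + θ j) by ring,
          show (n:ℝ) * (2 * π) = π * (2 * n) by ring] at hn
        exact mul_left_cancel₀ hπ.ne' hn
      obtain ⟨h1, h2⟩ := hmem i
      obtain ⟨h3, h4⟩ := hmem j
      have hlt : (0:ℝ) < 2 * n := by linarith
      have hgt : (2:ℝ) * n < 2 := by linarith
      have l1 : (0:ℤ) < n := by exact_mod_cast (by linarith : (0:ℝ) < (n:ℝ))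
      have l2 : (n:ℤ) < 1 := by exact_mod_cast (by linarith : ((n:ℤ):ℝ) < 1)
      omega
  have habs : ∀ i j, i ≠ j → |α i| ≠ |α j| := by
    intro i j hij he
    obtain ⟨h1, h2⟩ := hpair i j hij
    rcases abs_eq_abs.mp he with h | h
    · exact h1 h
    · exact h2 h
  refine ⟨⟨h0, hpair, habs⟩, ?_⟩
  intro i₀ hmax
  have hα0 : α i₀ ≠ 0 := h0 i₀
  refine ⟨?_, ?_, ?_⟩
  · rw [hP]
    exact ⟨2 / α i₀, funext fun i => by congr 1; ring⟩
  · rw [mul_div_assoc, div_self hα0, mul_one, Circle.exp_two_pi]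
  · intro j hj he
    rw [Circle.exp_eq_one] at he
    obtain ⟨n, hn⟩ := he
    have h2π : (2:ℝ) * π ≠ 0 := by positivity
    have hdiv : α j = n * α i₀ := by
      field_simp at hn
      nlinarith [hπ]
    have hj0 : α j ≠ 0 := h0 j
    have hn0 : n ≠ 0 := by rintro rfl; simp at hdiv; exact hj0 hdiv
    have hi0pos : 0 < |α i₀| := abs_pos.mpr hα0
    have h1 : |(n:ℝ)| * |α i₀| ≤ |α i₀| := by
      rw [← abs_mul, ← hdiv]; exact hmax j
    have h2 : |(n:ℝ)| ≤ 1 := by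
      by_contra h
      push_neg at h
      nlinarith
    have h3 : |n| ≤ 1 := by exact_mod_cast (by rwa [← Int.cast_abs] at h2 : ((|n|:ℤ):ℝ) ≤ 1)
    have : n = 1 ∨ n = -1 := by rw [abs_le] at h3; omega
    rcases this with rfl | rfl
    · exact (hpair j i₀ hj).1 (by simpa using hdiv)
    · exact (hpair j i₀ hj).2 (by push_cast at hdiv; linarith)
end

section
/- Let n ≥ 0 be an integer and let S ⊆ ℝ be a set such that for all x ∈ ℝ, x ∈ S if and only if x + 1 ∈ S, and such that S ∩ [0,1) has exactly n+1 elements. If s : ℤ → ℝ is a strictly increasing function whose image is S, then s(k + n + 1) = s(k) + 1 for every k ∈ ℤ. -/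
/-! Reduction modulo the period into `[b, b + p)` is a bijection from `S ∩ [a, a + p)` onto
`S ∩ [b, b + p)`, so every half-open unit window meets `S` in `n + 1` points. If `s j = s k + 1`,
the window `[s k, s k + 1)` contains exactly `s k, …, s (j - 1)`, hence `j - k = n + 1`. -/

section Periodic

variable {α : Type*} [AddCommGroup α] [LinearOrder α] [IsOrderedAddMonoid α] [Archimedean α]
  {p : α} {S : Set α}

theorem toIcoMod_mem_iff_of_periodic (hp : 0 < p) (hS : ∀ x, x ∈ S ↔ x + p ∈ S) (a x : α) :
    toIcoMod hp a x ∈ S ↔ x ∈ S := by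
  have hper : Function.Periodic (· ∈ S) p := fun x ↦ propext (hS x).symm
  rw [← self_sub_toIcoDiv_zsmul]
  exact Iff.of_eq (hper.sub_zsmul_eq _)

theorem ncard_inter_Ico_eq_of_periodic (hp : 0 < p) (hS : ∀ x, x ∈ S ↔ x + p ∈ S)
    (a b : α) :
    (S ∩ Set.Ico a (a + p)).ncard = (S ∩ Set.Ico b (b + p)).ncard := by
  refine Set.BijOn.ncard_eq (f := toIcoMod hp b) <|
    Set.InvOn.bijOn (f' := toIcoMod hp a) ?_ ?_ ?_
  · constructor <;> rintro x ⟨-, hx⟩ <;>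
      simp only [toIcoMod_toIcoMod, (toIcoMod_eq_self hp).mpr hx]
  · exact fun x hx ↦
      ⟨(toIcoMod_mem_iff_of_periodic hp hS b x).mpr hx.1, toIcoMod_mem_Ico hp b x⟩
  · exact fun x hx ↦
      ⟨(toIcoMod_mem_iff_of_periodic hp hS a x).mpr hx.1, toIcoMod_mem_Ico hp a x⟩

end Periodic

theorem StrictMono.ncard_range_inter_Ico {α : Type*} [Preorder α] {s : ℤ → α}
    (hs : StrictMono s) (k j : ℤ) :
    (Set.range s ∩ Set.Ico (s k) (s j)).ncard = (j - k).toNat := by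
  have hpre : s ⁻¹' Set.Ico (s k) (s j) = Set.Ico k j :=
    (OrderEmbedding.ofStrictMono s hs).preimage_Ico k j
  rw [Set.inter_comm, ← Set.image_preimage_eq_inter_range, hpre,
    Set.ncard_image_of_injective _ hs.injective, ← Finset.coe_Ico, Set.ncard_coe_finset,
    Int.card_Ico]

/-- Shift property of the action spectrum of a non-degenerate rotation of `ℂPⁿ`:
if `S ⊆ ℝ` is invariant under translation by `1` and meets `[0,1)` in exactly `n+1`
points, then any strictly increasing enumeration `s : ℤ → ℝ` of `S` satisfies
`s(k + n + 1) = s(k) + 1`. -/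
theorem spectrum_shift (n : ℕ) (S : Set ℝ)
    (hshift : ∀ x : ℝ, x ∈ S ↔ x + 1 ∈ S)
    (hcard : (S ∩ Set.Ico (0 : ℝ) 1).ncard = n + 1)
    (s : ℤ → ℝ) (hmono : StrictMono s) (hrange : Set.range s = S) :
    ∀ k : ℤ, s (k + (n + 1)) = s k + 1 := by
  intro k
  obtain ⟨j, hj⟩ : s k + 1 ∈ Set.range s := by
    rw [hrange, ← hshift, ← hrange]
    exact Set.mem_range_self k
  have hcount : (j - k).toNat = n + 1 := by
    rw [← hmono.ncard_range_inter_Ico, hj, hrange,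
      ncard_inter_Ico_eq_of_periodic one_pos hshift _ 0, zero_add, hcard]
  rw [show k + (n + 1) = j by omega, hj]
end
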